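/- arXiv:1308.3796 — 3 statements merged into one kernel-verified Lean document; each statement's English description precedes it below -/
import Mathlib

section
/- Let f : ℝ → ℝ be continuous with f(τ) > 0 for all τ, and suppose that (log f(τ))/τ tends to a finite limit k_c as τ → −∞. If μ is a real number with μ < −k_c, then for every t ∈ ℝ the function τ ↦ f(τ)·exp(μ·(τ − t)) is NOT integrable on the half-line (−∞, t]. -/
/-! For any `a > k_c`, eventually `f τ ≥ exp (a τ)` as `τ → −∞`. Taking `k_c < a < −μ`, the
integrand is at least `exp (a τ + μ (τ − t)) ≥ exp (−μ t) > 0` near `−∞`, so it is bounded below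
by a positive constant on a half-line of infinite measure. -/

open MeasureTheory Filter Set Real Topology

theorem not_integrableOn_Iic_of_eventually_le_norm {E : Type*} [NormedAddCommGroup E]
    {g : ℝ → E} {c : ℝ} (hc : 0 < c) (hg : ∀ᶠ τ in atBot, c ≤ ‖g τ‖) (t : ℝ) :
    ¬ IntegrableOn g (Iic t) := by
  intro hint
  obtain ⟨T, hT⟩ := eventually_atBot.mp hg
  refine (hint.measure_norm_ge_lt_top hc).ne (top_unique ?_)
  calc ⊤ = volume (Iic (min T t)) := Real.volume_Iic.symm
    _ ≤ volume ({τ | c ≤ ‖g τ‖} ∩ Iic t) :=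
        measure_mono fun τ (hτ : τ ≤ min T t) =>
          ⟨hT τ (hτ.trans (min_le_left _ _)), mem_Iic.mpr (hτ.trans (min_le_right _ _))⟩
    _ ≤ volume.restrict (Iic t) {τ | c ≤ ‖g τ‖} := Measure.le_restrict_apply _ _

theorem eventually_exp_mul_le_of_tendsto_log_div {f : ℝ → ℝ} (hfpos : ∀ τ, 0 < f τ) {k a : ℝ}
    (hlim : Tendsto (fun τ => log (f τ) / τ) atBot (𝓝 k)) (hka : k < a) :
    ∀ᶠ τ in atBot, exp (a * τ) ≤ f τ := by
  filter_upwards [hlim.eventually (gt_mem_nhds hka), eventually_lt_atBot 0] with τ hτ hneg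
  rw [← le_log_iff_exp_le (hfpos τ)]
  linarith [(div_lt_iff_of_neg hneg).mp hτ]

theorem stmt_0_general (f : ℝ → ℝ) (hfpos : ∀ τ, 0 < f τ) (k_c : ℝ)
    (hlim : Tendsto (fun τ => Real.log (f τ) / τ) atBot (nhds k_c))
    (μ : ℝ) (hμ : μ < -k_c) :
    ∀ t : ℝ, ¬ IntegrableOn (fun τ => f τ * Real.exp (μ * (τ - t))) (Iic t) := by
  intro t
  obtain ⟨a, hka, haμ⟩ := exists_between (show k_c < -μ by linarith)
  refine not_integrableOn_Iic_of_eventually_le_norm (exp_pos (-(μ * t))) ?_ t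
  filter_upwards [eventually_exp_mul_le_of_tendsto_log_div hfpos hlim hka, eventually_le_atBot 0]
    with τ hfτ hτ
  rw [norm_mul, norm_of_nonneg (hfpos τ).le, norm_of_nonneg (exp_pos _).le]
  calc exp (-(μ * t)) ≤ exp (a * τ) * exp (μ * (τ - t)) := by
        rw [← exp_add, exp_le_exp]; nlinarith
    _ ≤ f τ * exp (μ * (τ - t)) := by gcongr

/-- Divergence half of Theorem 1: if the critical exponent of the positive continuous
kernel magnitude `f` is `k_c = lim_{τ→−∞} (log f τ)/τ` and `μ < −k_c`, then for every `t`
the weighted kernel `τ ↦ f τ · exp (μ (τ − t))` is not integrable on `(−∞, t]`. -/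
theorem stmt_0 (f : ℝ → ℝ) (hf : Continuous f) (hfpos : ∀ τ, 0 < f τ) (k_c : ℝ)
    (hlim : Tendsto (fun τ => Real.log (f τ) / τ) atBot (nhds k_c))
    (μ : ℝ) (hμ : μ < -k_c) :
    ∀ t : ℝ, ¬ IntegrableOn (fun τ => f τ * Real.exp (μ * (τ - t))) (Iic t) :=
  stmt_0_general f hfpos k_c hlim μ hμ
end

section
/- Let f : ℝ → ℝ be continuous with f(τ) > 0 for all τ, and suppose that (log f(τ))/τ tends to a finite limit k_c as τ → −∞. If μ is a real number with μ > −k_c, then for every t ∈ ℝ the function τ ↦ f(τ)·exp(μ·(τ − t)) IS integrable on the half-line (−∞, t]. -/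
/-!
For `a < k_c` and `τ → −∞`, dividing by the negative `τ` turns `a < log f τ / τ` into
`log f τ < a τ`, so `|f τ| ≤ exp (a τ)` near `−∞`. Taking `a` with `a + μ > 0`, the integrand is `O(exp ((a + μ) τ))` at `−∞`, which is
integrable there; continuity takes care of the remaining compact piece.
-/

open MeasureTheory Filter Set

open Asymptotics Real

theorem abs_le_exp_log (x : ℝ) : |x| ≤ exp (log x) := by
  rcases eq_or_ne x 0 with rfl | hx
  · simp
  · rw [← log_abs, exp_log (abs_pos.2 hx)]

theorem isBigO_exp_mul_atBot_of_tendsto_log_div {f : ℝ → ℝ} {k a : ℝ}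
    (hlim : Tendsto (fun τ => log (f τ) / τ) atBot (nhds k)) (ha : a < k) :
    f =O[atBot] fun τ => exp (a * τ) := by
  refine IsBigO.of_bound 1 ?_
  filter_upwards [hlim.eventually (eventually_gt_nhds ha), eventually_lt_atBot 0]
    with τ hτa hτ
  rw [lt_div_iff_of_neg hτ] at hτa
  rw [one_mul, Real.norm_eq_abs, Real.norm_of_nonneg (exp_pos _).le]
  exact (abs_le_exp_log _).trans (exp_le_exp.2 hτa.le)

theorem integrableAtFilter_exp_mul_atBot {b : ℝ} (hb : 0 < b) :
    IntegrableAtFilter (fun x => exp (b * x)) atBot :=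
  ⟨Iic 0, Iic_mem_atBot 0, integrableOn_exp_mul_Iic hb 0⟩

theorem stmt_1_general (f : ℝ → ℝ) (hf : Continuous f) (k_c : ℝ)
    (hlim : Tendsto (fun τ => Real.log (f τ) / τ) atBot (nhds k_c))
    (μ : ℝ) (hμ : -k_c < μ) :
    ∀ t : ℝ, IntegrableOn (fun τ => f τ * Real.exp (μ * (τ - t))) (Iic t) := by
  intro t
  obtain ⟨a, ha, hb⟩ : ∃ a, a < k_c ∧ 0 < a + μ := ⟨(k_c - μ) / 2, by linarith, by linarith⟩
  have hf_bigO := isBigO_exp_mul_atBot_of_tendsto_log_div hlim ha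
  refine LocallyIntegrableOn.integrableOn_of_isBigO_atBot ?_ ?_
    (integrableAtFilter_exp_mul_atBot hb)
  · exact (hf.mul (by fun_prop)).locallyIntegrable.locallyIntegrableOn _
  · calc (fun τ => f τ * exp (μ * (τ - t)))
        =O[atBot] fun τ => exp (a * τ) * exp (μ * (τ - t)) := hf_bigO.mul (isBigO_refl _ _)
      _ = fun τ => exp (-(μ * t)) * exp ((a + μ) * τ) := by
        funext τ
        rw [← exp_add, ← exp_add]
        ring_nf
      _ =O[atBot] fun τ => exp ((a + μ) * τ) := isBigO_const_mul_self _ _ _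

/-- Convergence half of Theorem 1: if the critical exponent of the positive continuous
kernel magnitude `f` is `k_c = lim_{τ→−∞} (log f τ)/τ` and `μ > −k_c`, then for every `t`
the weighted kernel `τ ↦ f τ · exp (μ (τ − t))` is integrable on `(−∞, t]`. -/
theorem stmt_1 (f : ℝ → ℝ) (hf : Continuous f) (hfpos : ∀ τ, 0 < f τ) (k_c : ℝ)
    (hlim : Tendsto (fun τ => Real.log (f τ) / τ) atBot (nhds k_c))
    (μ : ℝ) (hμ : -k_c < μ) :
    ∀ t : ℝ, IntegrableOn (fun τ => f τ * Real.exp (μ * (τ - t))) (Iic t) :=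
  stmt_1_general f hf k_c hlim μ hμ
end

section
/- Let n ≥ 1 and let K : ℝ × ℝ → Matrix (Fin n) (Fin n) ℝ be such that for each t the map τ ↦ K(t,τ) is continuous with ‖K(t,τ)‖ > 0 for all τ, and suppose that for each t the critical exponent k_c(t) := lim_{τ→−∞} (log ‖K(t,τ)‖)/τ exists as a finite real number. If μ ∈ ℝ is such that for every t ∈ ℝ the function τ ↦ ‖K(t,τ)‖·exp(μ·(τ − t)) is integrable on (−∞, t], then μ ≥ −k_c(t) for every t ∈ ℝ; in particular, for any T > 0, μ ≥ −(infimum over t ∈ [0,T] of k_c(t)). -/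
/- If `log g(τ) / τ → k` as `τ → -∞` and `μ < -k`, then `log g(τ) + μ (τ - t) = τ (log g(τ)/τ + μ) - μ t`
is a negative multiple of `τ` up to lower order terms, so it tends to `+∞`; a function tending to `+∞`
at `-∞` is bounded below by `1` on a half-line of infinite measure and cannot be integrable there. -/

open MeasureTheory Filter Set

attribute [local instance] Matrix.linftyOpNormedAddCommGroup

theorem not_integrableOn_Iic_of_tendsto_atBot_atTop {f : ℝ → ℝ} (hf : Tendsto f atBot atTop)
    (a : ℝ) : ¬ IntegrableOn f (Iic a) := by
  intro hint
  obtain ⟨b, hb⟩ := eventually_atBot.1 (hf.eventually_ge_atTop 1)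
  have hsub : Iic (min a b) ⊆ Iic a := Iic_subset_Iic.2 (min_le_left a b)
  have hone : IntegrableOn (fun _ => (1 : ℝ)) (Iic (min a b)) := by
    refine (hint.mono_set hsub).mono' aestronglyMeasurable_const ?_
    refine (ae_restrict_iff' measurableSet_Iic).2 (Eventually.of_forall fun x hx => ?_)
    simpa using hb x (hx.trans (min_le_right a b))
  simp [integrableOn_const_iff, Real.volume_Iic] at hone

theorem tendsto_mul_exp_atBot_atTop_of_tendsto_log_div {g : ℝ → ℝ} (hg : ∀ τ, 0 < g τ) {k μ : ℝ}
    (hlim : Tendsto (fun τ => Real.log (g τ) / τ) atBot (nhds k)) (hμ : μ < -k) (t : ℝ) :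
    Tendsto (fun τ => g τ * Real.exp (μ * (τ - t))) atBot atTop := by
  have hexponent : Tendsto (fun τ => Real.log (g τ) + μ * (τ - t)) atBot atTop := by
    have hrate : Tendsto (fun τ => τ * (Real.log (g τ) / τ + μ)) atBot atTop :=
      tendsto_id.atBot_mul_neg (by linarith) (hlim.add_const μ)
    refine (tendsto_atTop_add_const_right _ (-(μ * t)) hrate).congr' ?_
    filter_upwards [eventually_lt_atBot 0] with τ hτ
    rw [mul_add, mul_div_cancel₀ _ hτ.ne]
    ring
  refine (Real.tendsto_exp_atTop.comp hexponent).congr fun τ => ?_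
  simp only [Function.comp_apply, Real.exp_add, Real.exp_log (hg τ)]

theorem stmt_2_general (n : ℕ) (K : ℝ × ℝ → Matrix (Fin n) (Fin n) ℝ)
    (hKpos : ∀ t τ : ℝ, 0 < ‖K (t, τ)‖)
    (k_c : ℝ → ℝ)
    (hlim : ∀ t : ℝ, Tendsto (fun τ => Real.log ‖K (t, τ)‖ / τ) atBot (nhds (k_c t)))
    (μ : ℝ)
    (hint : ∀ t : ℝ, IntegrableOn (fun τ => ‖K (t, τ)‖ * Real.exp (μ * (τ - t))) (Iic t)) :
    (∀ t : ℝ, μ ≥ -k_c t) ∧ ∀ T : ℝ, 0 < T → μ ≥ -sInf (k_c '' Icc 0 T) := by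
  have hbound : ∀ t : ℝ, μ ≥ -k_c t := fun t => by
    by_contra! hμ
    exact not_integrableOn_Iic_of_tendsto_atBot_atTop
      (tendsto_mul_exp_atBot_atTop_of_tendsto_log_div (hKpos t) (hlim t) hμ t) t (hint t)
  refine ⟨hbound, fun T hT => ?_⟩
  have hne : (k_c '' Icc 0 T).Nonempty := (nonempty_Icc.2 hT.le).image k_c
  have hinf : -μ ≤ sInf (k_c '' Icc 0 T) :=
    le_csInf hne (forall_mem_image.2 fun s _ => by linarith [hbound s])
  linarith

/-- Theorem 1 of the paper: if for every `t` the weighted kernel norm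
`τ ↦ ‖K t τ‖ · exp (μ (τ − t))` is integrable on `(−∞, t]`, then `μ ≥ −k_c t` for every
`t`, where `k_c t = lim_{τ→−∞} (log ‖K t τ‖)/τ` is the critical exponent; in particular
`μ ≥ −inf_{t ∈ [0,T]} k_c t` for any period `T > 0`. -/
theorem stmt_2 (n : ℕ) (hn : 1 ≤ n) (K : ℝ × ℝ → Matrix (Fin n) (Fin n) ℝ)
    (hKcont : ∀ t : ℝ, Continuous fun τ => K (t, τ))
    (hKpos : ∀ t τ : ℝ, 0 < ‖K (t, τ)‖)
    (k_c : ℝ → ℝ)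
    (hlim : ∀ t : ℝ, Tendsto (fun τ => Real.log ‖K (t, τ)‖ / τ) atBot (nhds (k_c t)))
    (μ : ℝ)
    (hint : ∀ t : ℝ, IntegrableOn (fun τ => ‖K (t, τ)‖ * Real.exp (μ * (τ - t))) (Iic t)) :
    (∀ t : ℝ, μ ≥ -k_c t) ∧ ∀ T : ℝ, 0 < T → μ ≥ -sInf (k_c '' Icc 0 T) :=
  stmt_2_general n K hKpos k_c hlim μ hint
end
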